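/- arXiv:1603.03700 — 5 statements merged into one kernel-verified Lean document; each statement's English description precedes it below -/
import Mathlib

section
/- For every positive integer m, (π/(2m))² · Σ_{k=1}^{m-1} cos⁻²(kπ/(2m)) = (π²/6)·(1 − 1/m²). -/
open Real Finset

/-!
By de Moivre, `sin (2mθ) = cos θ ^ (2m) · tan θ · P (tan θ ^ 2)` with
`P = ∑_{j<m} (-1)^j C(2m, 2j+1) X^j`, a polynomial of degree `m - 1`. The `m - 1` distinct
numbers `tan² (kπ/(2m))`, `0 < k < m`, are therefore all its roots, and Vieta's formula gives
their sum as `C(2m, 3) / (2m) = (2m - 1)(m - 1)/3`. As `sec² = 1 + tan²`, the sum of the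
`sec² (kπ/(2m))` is `2(m² - 1)/3`.
-/

open Polynomial

theorem Finset.sum_range_two_mul {M : Type*} [AddCommMonoid M] (f : ℕ → M) (n : ℕ) :
    ∑ k ∈ range (2 * n), f k = ∑ j ∈ range n, f (2 * j) + ∑ j ∈ range n, f (2 * j + 1) := by
  induction n with
  | zero => simp
  | succ n ih =>
    rw [mul_add, mul_one, sum_range_succ, sum_range_succ, ih, sum_range_succ, sum_range_succ]
    abel

theorem Nat.cast_choose_three (K : Type*) [Field K] [CharZero K] (a : ℕ) :
    (a.choose 3 : K) = a * (a - 1) * (a - 2) / 6 := by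
  rcases lt_or_ge a 3 with ha | ha
  · interval_cases a <;> simp [Nat.choose]
  · have h := congrArg (Nat.cast (R := K)) (Nat.descFactorial_eq_factorial_mul_choose a 3)
    simp only [Nat.descFactorial_succ, Nat.descFactorial_zero, Nat.factorial, Nat.sub_zero] at h
    push_cast [Nat.cast_sub (by omega : 1 ≤ a), Nat.cast_sub (by omega : 2 ≤ a)] at h
    rw [eq_div_iff (by norm_num)]
    linear_combination -h

noncomputable def tanSqPoly (n : ℕ) : ℝ[X] :=
  ∑ j ∈ range n, C ((-1) ^ j * ((2 * n).choose (2 * j + 1) : ℝ)) * X ^ j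

theorem eval_tanSqPoly (n : ℕ) (x : ℝ) :
    (tanSqPoly n).eval x = ∑ j ∈ range n, (-1) ^ j * ((2 * n).choose (2 * j + 1) : ℝ) * x ^ j := by
  simp [tanSqPoly, eval_finsetSum]

theorem coeff_tanSqPoly (n i : ℕ) :
    (tanSqPoly n).coeff i = if i < n then (-1) ^ i * ((2 * n).choose (2 * i + 1) : ℝ) else 0 := by
  simp only [tanSqPoly, finsetSum_coeff, coeff_C_mul, coeff_X_pow, mul_ite, mul_one, mul_zero,
    sum_ite_eq, mem_range]

theorem Complex.im_one_add_mul_I_pow_two_mul (t : ℝ) (n : ℕ) :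
    ((1 + t * I) ^ (2 * n)).im = t * (tanSqPoly n).eval (t ^ 2) := by
  have hsq : ((t : ℂ) * I) ^ 2 = ((-t ^ 2 : ℝ) : ℂ) := by push_cast; ring_nf; simp
  have heven (j : ℕ) :
      (((t : ℂ) * I) ^ (2 * j) * 1 ^ (2 * n - 2 * j) * (2 * n).choose (2 * j)).im = 0 := by
    rw [pow_mul, hsq, one_pow, mul_one]; norm_cast
  have hodd (j : ℕ) :
      (((t : ℂ) * I) ^ (2 * j + 1) * 1 ^ (2 * n - (2 * j + 1)) * (2 * n).choose (2 * j + 1)).im =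
        t * ((-1) ^ j * ((2 * n).choose (2 * j + 1) : ℝ) * (t ^ 2) ^ j) := by
    rw [pow_succ, pow_mul, hsq, one_pow, mul_one]
    rw [show ∀ z w : ℂ, z * (t * I) * w = (z * t * w) * I from fun _ _ => by ring]
    rw [mul_I_im, ← ofReal_pow, ← ofReal_natCast, ← ofReal_mul, ← ofReal_mul, ofReal_re]
    ring
  rw [eval_tanSqPoly, mul_sum, add_comm, add_pow, im_sum, sum_range_succ, sum_range_two_mul]
  simp only [heven, hodd, sum_const_zero, zero_add, add_zero]

theorem natDegree_tanSqPoly {n : ℕ} (hn : 0 < n) : (tanSqPoly n).natDegree = n - 1 := by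
  refine natDegree_eq_of_le_of_coeff_ne_zero ?_ ?_
  · exact natDegree_le_iff_coeff_eq_zero.2 fun i hi => by
      rw [coeff_tanSqPoly, if_neg (by omega)]
  · rw [coeff_tanSqPoly, if_pos (by omega)]
    have : 0 < (2 * n).choose (2 * (n - 1) + 1) := Nat.choose_pos (by omega)
    positivity

theorem leadingCoeff_tanSqPoly {n : ℕ} (hn : 0 < n) :
    (tanSqPoly n).leadingCoeff = (-1) ^ (n - 1) * (2 * n) := by
  rw [leadingCoeff, natDegree_tanSqPoly hn, coeff_tanSqPoly, if_pos (by omega),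
    show 2 * (n - 1) + 1 = 2 * n - 1 by omega, Nat.choose_symm (by omega), Nat.choose_one_right]
  push_cast; ring

theorem nextCoeff_tanSqPoly {n : ℕ} (hn : 0 < n) :
    (tanSqPoly n).nextCoeff = -((-1) ^ (n - 1) * ((2 * n).choose 3 : ℝ)) := by
  rcases (show 1 ≤ n from hn).eq_or_lt with rfl | hn2
  · simp [nextCoeff, natDegree_tanSqPoly]
  rw [nextCoeff_of_natDegree_pos (by rw [natDegree_tanSqPoly hn]; omega), natDegree_tanSqPoly hn,
    coeff_tanSqPoly, if_pos (by omega), show 2 * (n - 1 - 1) + 1 = 2 * n - 3 by omega,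
    Nat.choose_symm (by omega)]
  obtain ⟨k, rfl⟩ : ∃ k, n = k + 2 := ⟨n - 2, by omega⟩
  rw [show k + 2 - 1 - 1 = k by omega, show k + 2 - 1 = k + 1 by omega, pow_succ]
  ring

theorem sin_two_mul_nat_mul_eq {θ : ℝ} (hθ : cos θ ≠ 0) (n : ℕ) :
    sin (2 * n * θ) = cos θ ^ (2 * n) * (tan θ * (tanSqPoly n).eval (tan θ ^ 2)) := by
  have hfactor : (cos θ + sin θ * Complex.I : ℂ) = cos θ * (1 + tan θ * Complex.I) := by
    have : (cos θ : ℂ) ≠ 0 := by exact_mod_cast hθ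
    rw [tan_eq_sin_div_cos, Complex.ofReal_div]
    field_simp
  have h := congrArg Complex.im (Complex.cos_add_sin_mul_I_pow (2 * n) θ)
  rw [← Complex.ofReal_cos, ← Complex.ofReal_sin, hfactor, mul_pow, ← Complex.ofReal_pow,
    Complex.im_ofReal_mul, Complex.im_one_add_mul_I_pow_two_mul] at h
  rw [h, show ((2 * n : ℕ) : ℂ) * θ = ((2 * n * θ : ℝ) : ℂ) by push_cast; ring,
    ← Complex.ofReal_cos, ← Complex.ofReal_sin, Complex.add_im, Complex.ofReal_im,
    Complex.mul_I_im, Complex.ofReal_re, zero_add]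

theorem nat_mul_pi_div_mem_Ico {k m : ℕ} (hk : k < m) :
    k * π / (2 * m) ∈ Set.Ico 0 (π / 2) := by
  have hkm : (k : ℝ) < m := by exact_mod_cast hk
  have hm : (0 : ℝ) < m := by exact_mod_cast k.zero_le.trans_lt hk
  refine ⟨by positivity, ?_⟩
  rw [div_lt_iff₀ (by positivity)]
  nlinarith [pi_pos]

theorem cos_nat_mul_pi_div_pos {k m : ℕ} (hk : k < m) : 0 < cos (k * π / (2 * m)) :=
  cos_pos_of_mem_Ioo
    ⟨by linarith [(nat_mul_pi_div_mem_Ico hk).1, pi_pos], (nat_mul_pi_div_mem_Ico hk).2⟩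

theorem eval_tanSqPoly_tan_sq {k m : ℕ} (hk : 0 < k) (hkm : k < m) :
    (tanSqPoly m).eval (tan (k * π / (2 * m)) ^ 2) = 0 := by
  have hm : (0 : ℝ) < m := by exact_mod_cast hk.trans hkm
  have hpos : 0 < k * π / (2 * m) := by
    have : (0 : ℝ) < k := by exact_mod_cast hk
    positivity
  have hcos := cos_nat_mul_pi_div_pos hkm
  have htan : 0 < tan (k * π / (2 * m)) :=
    tan_pos_of_pos_of_lt_pi_div_two hpos (nat_mul_pi_div_mem_Ico hkm).2
  have hsin := sin_nat_mul_pi k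
  rw [show (k : ℝ) * π = 2 * m * (k * π / (2 * m)) by field_simp,
    sin_two_mul_nat_mul_eq hcos.ne'] at hsin
  simpa [hcos.ne', htan.ne'] using hsin

theorem injOn_tan_sq_nat_mul_pi_div (m : ℕ) :
    Set.InjOn (fun k : ℕ => tan (k * π / (2 * m)) ^ 2) (Set.Iio m) := by
  intro a ha b hb hab
  have hm : (0 : ℝ) < m := by exact_mod_cast a.zero_le.trans_lt ha
  have hIoo {k : ℕ} (hk : k < m) : k * π / (2 * m) ∈ Set.Ioo (-(π / 2)) (π / 2) :=
    ⟨by linarith [(nat_mul_pi_div_mem_Ico hk).1, pi_pos], (nat_mul_pi_div_mem_Ico hk).2⟩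
  have htan_nonneg {k : ℕ} (hk : k < m) : 0 ≤ tan (k * π / (2 * m)) :=
    tan_nonneg_of_nonneg_of_le_pi_div_two (nat_mul_pi_div_mem_Ico hk).1
      (nat_mul_pi_div_mem_Ico hk).2.le
  have htan := (pow_left_inj₀ (htan_nonneg ha) (htan_nonneg hb) two_ne_zero).1 hab
  have := injOn_tan (hIoo ha) (hIoo hb) htan
  field_simp at this
  exact_mod_cast this

theorem sum_tan_sq_nat_mul_pi_div {m : ℕ} (hm : 0 < m) :
    ∑ k ∈ Icc 1 (m - 1), tan (k * π / (2 * m)) ^ 2 = (2 * m - 1) * (m - 1) / 3 := by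
  set f : ℕ → ℝ := fun k => tan (k * π / (2 * m)) ^ 2
  have hinj : Set.InjOn f (Icc 1 (m - 1)) :=
    (injOn_tan_sq_nat_mul_pi_div m).mono fun k hk => by
      simp only [coe_Icc, Set.mem_Icc, Set.mem_Iio] at hk ⊢
      omega
  have hcard : ((Icc 1 (m - 1)).image f).card = (tanSqPoly m).natDegree := by
    rw [card_image_of_injOn hinj, natDegree_tanSqPoly hm, Nat.card_Icc]; omega
  have hP : tanSqPoly m ≠ 0 := fun h => by simpa [h, hm.ne'] using leadingCoeff_tanSqPoly hm
  have hroots : (tanSqPoly m).roots = ((Icc 1 (m - 1)).image f).val := by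
    refine roots_eq_of_natDegree_le_card_of_ne_zero ?_ hcard.ge hP
    simp only [mem_image, mem_Icc, forall_exists_index, and_imp]
    rintro _ k hk1 hkm rfl
    exact eval_tanSqPoly_tan_sq hk1 (by omega)
  have hsplits : (tanSqPoly m).Splits := splits_iff_card_roots.2 (by rw [hroots, card_val, hcard])
  have hvieta := hsplits.nextCoeff_eq_neg_sum_roots_mul_leadingCoeff
  rw [hroots, sum_val, sum_image hinj, nextCoeff_tanSqPoly hm, leadingCoeff_tanSqPoly hm,
    Nat.cast_choose_three] at hvieta
  have hsign : (-1 : ℝ) ^ (m - 1) * (2 * m) ≠ 0 := by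
    have : (0 : ℝ) < m := by exact_mod_cast hm
    positivity
  apply mul_left_cancel₀ hsign
  push_cast [id] at hvieta
  linear_combination hvieta

theorem gardner_fisher_v1 (m : ℕ) (hm : 0 < m) :
    (π / (2 * m)) ^ 2 * ∑ k ∈ Finset.Icc 1 (m - 1),
      (1 / Real.cos (k * π / (2 * m))) ^ 2 =
    (π ^ 2 / 6) * (1 - 1 / (m : ℝ) ^ 2) := by
  have hsec : ∀ k ∈ Icc 1 (m - 1),
      (1 / cos (k * π / (2 * m))) ^ 2 = 1 + tan (k * π / (2 * m)) ^ 2 := fun k hk => by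
    have hcos := (cos_nat_mul_pi_div_pos (k := k) (m := m) (by rw [mem_Icc] at hk; omega)).ne'
    rw [one_div, inv_pow, ← inv_one_add_tan_sq hcos, inv_inv]
  rw [sum_congr rfl hsec, sum_add_distrib, sum_tan_sq_nat_mul_pi_div hm, sum_const, Nat.card_Icc,
    Nat.add_sub_cancel, nsmul_eq_mul, Nat.cast_pred hm]
  have : (m : ℝ) ≠ 0 := by positivity
  field_simp
  ring
end

section
/- For every positive integer v, lim_{m→∞} (π/(2m))^{2v} Σ_{k=1}^{m-1} cos^{−2v}(kπ/(2m)) = ζ(2v), where ζ is the Riemann zeta function. -/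
open Real Finset Filter

open scoped Topology

/-! Reflecting `k ↦ m - k` turns the secants into cosecants, and the `j`-th term
`(π / (2m) · csc (jπ / (2m)))ⁿ` tends to `j⁻ⁿ` as `m → ∞` because `sin x / x → 1`.
Jordan's inequality `sin x ≥ 2x / π` on `[0, π/2]` dominates every term by `(π / 2)ⁿ j⁻ⁿ`,
which is summable for `n > 1`, so Tannery's theorem lets the limit pass through the sum. -/

lemma sum_Icc_comp_cos_eq_sum_Icc_comp_sin (g : ℝ → ℝ) (m : ℕ) :
    ∑ k ∈ Icc 1 (m - 1), g (cos (k * π / (2 * m))) =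
      ∑ k ∈ Icc 1 (m - 1), g (sin (k * π / (2 * m))) := by
  have hreflect : ∀ k ∈ Icc 1 (m - 1), m - k ∈ Icc 1 (m - 1) ∧ m - (m - k) = k := by
    intro k hk
    simp only [mem_Icc] at *
    omega
  refine sum_nbij' (m - ·) (m - ·) (fun k hk ↦ (hreflect k hk).1) (fun k hk ↦ (hreflect k hk).1)
    (fun k hk ↦ (hreflect k hk).2) (fun k hk ↦ (hreflect k hk).2) fun k hk ↦ ?_
  have hkm : k ≤ m := by simp only [mem_Icc] at hk; omega
  have hm : (m : ℝ) ≠ 0 := by simp only [mem_Icc] at hk; norm_cast; omega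
  rw [Nat.cast_sub hkm, ← sin_pi_div_two_sub]
  congr 2
  field_simp

lemma two_div_pi_le_sinc {x : ℝ} (hx₀ : 0 ≤ x) (hx : x ≤ π / 2) : 2 / π ≤ sinc x := by
  rcases hx₀.eq_or_lt with rfl | hx₀
  · rw [sinc_zero, div_le_one pi_pos]
    linarith [pi_gt_three]
  · rw [sinc_of_ne_zero hx₀.ne', le_div_iff₀ hx₀]
    exact mul_le_sin hx₀.le hx

/-- Writing `j = m - k` turns `π / (2m) · sec (kπ / (2m))` into `(j · sinc (jπ / (2m)))⁻¹`;
the terms are extended by zero to all `j : ℕ`. -/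
noncomputable def secantSumTerm (n m j : ℕ) : ℝ :=
  if j ∈ Icc 1 (m - 1) then (j * sinc (j * π / (2 * m)))⁻¹ ^ n else 0

lemma pi_div_mul_sum_inv_cos_pow_eq_tsum (n m : ℕ) :
    (π / (2 * m)) ^ n * ∑ k ∈ Icc 1 (m - 1), (1 / cos (k * π / (2 * m))) ^ n =
      ∑' j, secantSumTerm n m j := by
  rw [sum_Icc_comp_cos_eq_sum_Icc_comp_sin (fun c ↦ (1 / c) ^ n),
    tsum_eq_sum (f := secantSumTerm n m) fun j hj ↦ if_neg hj, mul_sum]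
  refine sum_congr rfl fun j hjm ↦ ?_
  have hj : (j : ℝ) ≠ 0 := by simp only [mem_Icc] at hjm; norm_cast; omega
  have hm : (m : ℝ) ≠ 0 := by simp only [mem_Icc] at hjm; norm_cast; omega
  rw [secantSumTerm, if_pos hjm, sinc_of_ne_zero (by positivity), ← mul_pow]
  field_simp

lemma norm_secantSumTerm_le (n m j : ℕ) :
    ‖secantSumTerm n m j‖ ≤ (π / 2) ^ n * ((j : ℝ) ^ n)⁻¹ := by
  unfold secantSumTerm
  split_ifs with hj
  · simp only [mem_Icc] at hj
    set x : ℝ := j * π / (2 * m)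
    have hj₀ : (0 : ℝ) < j := by norm_cast; omega
    have hjm : (j : ℝ) ≤ m := by norm_cast; omega
    have hm₀ : (0 : ℝ) < m := hj₀.trans_le hjm
    have hx : x ≤ π / 2 := by
      rw [div_le_div_iff₀ (by positivity) two_pos]
      nlinarith [pi_pos]
    have hsinc : 2 / π ≤ sinc x := two_div_pi_le_sinc (by positivity) hx
    have hsinc₀ : 0 < sinc x := (by positivity : (0 : ℝ) < 2 / π).trans_le hsinc
    rw [norm_pow, norm_inv, Real.norm_of_nonneg (by positivity), ← inv_pow, ← mul_pow]
    refine pow_le_pow_left₀ (by positivity) ?_ n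
    calc (j * sinc x)⁻¹ ≤ (j * (2 / π))⁻¹ := by gcongr
      _ = π / 2 * (j : ℝ)⁻¹ := by field_simp
  · rw [norm_zero]
    positivity

lemma tendsto_secantSumTerm {n : ℕ} (hn : n ≠ 0) (j : ℕ) :
    Tendsto (fun m ↦ secantSumTerm n m j) atTop (𝓝 ((j : ℝ) ^ n)⁻¹) := by
  rcases eq_or_ne j 0 with rfl | hj
  · simp [secantSumTerm, hn]
  have hangle : Tendsto (fun m : ℕ ↦ j * π / (2 * m)) atTop (𝓝 0) := by
    simpa only [div_div] using tendsto_const_div_atTop_nhds_zero_nat (j * π / 2)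
  have hsinc := (continuous_sinc.tendsto 0).comp hangle
  rw [sinc_zero] at hsinc
  have hterm := ((hsinc.const_mul (j : ℝ)).inv₀ (by simpa using hj)).pow n
  rw [mul_one, inv_pow] at hterm
  refine hterm.congr' ?_
  filter_upwards [eventually_gt_atTop j] with m hm
  rw [secantSumTerm, if_pos (by simp only [mem_Icc]; omega)]
  rfl

theorem tendsto_pi_div_mul_sum_inv_cos_pow {n : ℕ} (hn : 1 < n) :
    Tendsto (fun m : ℕ ↦ (π / (2 * m)) ^ n * ∑ k ∈ Icc 1 (m - 1), (1 / cos (k * π / (2 * m))) ^ n)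
      atTop (𝓝 (∑' j : ℕ, ((j : ℝ) ^ n)⁻¹)) := by
  simp only [pi_div_mul_sum_inv_cos_pow_eq_tsum]
  refine tendsto_tsum_of_dominated_convergence (bound := fun j : ℕ ↦ (π / 2) ^ n * ((j : ℝ) ^ n)⁻¹)
    ((Real.summable_nat_pow_inv.mpr hn).mul_left _) (tendsto_secantSumTerm (by omega))
    (.of_forall (norm_secantSumTerm_le n))

theorem gardner_fisher_limit (v : ℕ) (hv : 0 < v) :
    Filter.Tendsto
      (fun m : ℕ => (((π / (2 * m)) ^ (2 * v) * ∑ k ∈ Finset.Icc 1 (m - 1),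
        (1 / Real.cos (k * π / (2 * m))) ^ (2 * v) : ℝ) : ℂ))
      Filter.atTop (nhds (riemannZeta (2 * v))) := by
  have hzeta : riemannZeta (2 * v) = ((∑' j : ℕ, ((j : ℝ) ^ (2 * v))⁻¹ : ℝ) : ℂ) := by
    rw [show (2 * v : ℂ) = (2 * v : ℕ) by push_cast; rfl, zeta_nat_eq_tsum_of_gt_one (by omega),
      Complex.ofReal_tsum]
    push_cast
    simp only [one_div]
  rw [hzeta]
  exact (Complex.continuous_ofReal.tendsto _).comp (tendsto_pi_div_mul_sum_inv_cos_pow (by omega))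
end

section
/- For all real x with 0 < x < 1, π² csc²(πx) = −∫_0^1 (ln u)/(1−u) · (u^{x−1} + u^{−x}) du. -/
/-!
Expanding `1 / (1 - u)` as a geometric series and using `∫₀¹ u ^ (c - 1) * (-log u) du = 1 / c ^ 2`
turns the integral into `∑ₙ (1 / (n + x) ^ 2 + 1 / (n + 1 - x) ^ 2) = ∑_{n ∈ ℤ} 1 / (x + n) ^ 2`,
i.e. `ψ'(x) + ψ'(1 - x)`. The Fourier coefficients of `t ↦ exp (-2πixt)` on `[0, 1]` are
`(1 - exp (-2πix)) / (2πi (x + n))`, of modulus `|sin (πx)| / (π |x + n|)`, so Parseval's identity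
gives `∑_{n ∈ ℤ} 1 / (x + n) ^ 2 = π ^ 2 / sin (πx) ^ 2`.
-/

open Real MeasureTheory Set Filter Topology

theorem continuousOn_rpow_mul_log {s : ℝ} (hs : 0 < s) :
    ContinuousOn (fun u : ℝ => u ^ s * log u) (Ici 0) := by
  intro u hu
  rcases (mem_Ici.mp hu).eq_or_lt with rfl | hu0
  · rw [← continuousWithinAt_Ioi_iff_Ici, ContinuousWithinAt, zero_rpow hs.ne', zero_mul]
    simpa only [mul_comm] using tendsto_log_mul_rpow_nhdsGT_zero hs
  · exact ((continuousAt_id.rpow_const (Or.inl hu0.ne')).mul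
      (continuousAt_log hu0.ne')).continuousWithinAt

theorem hasDerivAt_rpow_mul_one_sub_mul_log {s u : ℝ} (hu : u ≠ 0) :
    HasDerivAt (fun v => v ^ s * (1 - s * log v)) (s ^ 2 * (u ^ (s - 1) * -log u)) u := by
  have hpow := hasDerivAt_rpow_const (p := s) (Or.inl hu)
  have hlog := ((hasDerivAt_log hu).const_mul s).const_sub 1
  refine (hpow.mul hlog).congr_deriv ?_
  rw [show u ^ s = u ^ (s - 1) * u by rw [← rpow_add_one hu]; ring_nf]
  field_simp
  ring

section LogMoment

variable {b : ℝ} (hb : -1 < b)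
include hb

private theorem rpow_mul_neg_log_primitive :
    ContinuousOn (fun u : ℝ => u ^ (b + 1) * (1 - (b + 1) * log u) / (b + 1) ^ 2) (Icc 0 1) ∧
    ∀ u ∈ Ioo (0 : ℝ) 1, HasDerivAt
      (fun u : ℝ => u ^ (b + 1) * (1 - (b + 1) * log u) / (b + 1) ^ 2) (u ^ b * -log u) u := by
  have hs : 0 < b + 1 := by linarith
  refine ⟨ContinuousOn.div_const ?_ _, fun u hu => ?_⟩
  · have := ((continuousOn_id.rpow_const fun _ _ => Or.inr hs.le).sub
      ((continuousOn_rpow_mul_log hs).const_smul (b + 1))).mono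
        (Icc_subset_Ici_self : Icc (0 : ℝ) 1 ⊆ Ici 0)
    refine this.congr fun u _ => ?_
    simp only [id, Pi.sub_apply, Pi.smul_apply, smul_eq_mul]
    ring
  · refine ((hasDerivAt_rpow_mul_one_sub_mul_log hu.1.ne').div_const _).congr_deriv ?_
    field_simp
    ring_nf

theorem intervalIntegrable_rpow_mul_neg_log :
    IntervalIntegrable (fun u : ℝ => u ^ b * -log u) volume 0 1 :=
  (intervalIntegrable_iff_integrableOn_Ioc_of_le zero_le_one).mpr <|
    intervalIntegral.integrableOn_deriv_of_nonneg (rpow_mul_neg_log_primitive hb).1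
      (rpow_mul_neg_log_primitive hb).2 fun _ hu =>
        mul_nonneg (rpow_nonneg hu.1.le _) (neg_nonneg.mpr (log_nonpos hu.1.le hu.2.le))

theorem integral_rpow_mul_neg_log :
    ∫ u in (0 : ℝ)..1, u ^ b * -log u = 1 / (b + 1) ^ 2 := by
  rw [intervalIntegral.integral_eq_sub_of_hasDerivAt_of_le zero_le_one
    (rpow_mul_neg_log_primitive hb).1 (rpow_mul_neg_log_primitive hb).2
    (intervalIntegrable_rpow_mul_neg_log hb)]
  simp [zero_rpow (by linarith : b + 1 ≠ 0)]

end LogMoment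

theorem integral_tsum_of_nonneg {α ι : Type*} [MeasurableSpace α] [Countable ι] {μ : Measure α}
    {F : ι → α → ℝ} {I : ℝ} (hF_int : ∀ i, Integrable (F i) μ) (hF_nonneg : ∀ i, 0 ≤ᵐ[μ] F i)
    (hI : HasSum (fun i => ∫ a, F i a ∂μ) I) : ∫ a, ∑' i, F i a ∂μ = I := by
  have h_norm : (fun i => ∫ a, ‖F i a‖ ∂μ) = fun i => ∫ a, F i a ∂μ :=
    funext fun i => integral_congr_ae <| (hF_nonneg i).mono fun _ ha => norm_of_nonneg ha
  exact (hasSum_integral_of_summable_integral_norm hF_int (h_norm ▸ hI.summable)).unique hI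

theorem hasSum_rpow_mul_neg_log {u : ℝ} (hu0 : 0 < u) (hu1 : u < 1) (c : ℝ) :
    HasSum (fun n : ℕ => u ^ (n + c) * -log u) (-log u / (1 - u) * u ^ c) := by
  have hterm (n : ℕ) : u ^ (n + c) * -log u = u ^ n * (u ^ c * -log u) := by
    rw [rpow_add hu0, rpow_natCast, mul_assoc]
  simp_rw [hterm]
  rw [show -log u / (1 - u) * u ^ c = (1 - u)⁻¹ * (u ^ c * -log u) by ring]
  exact (hasSum_geometric_of_lt_one hu0.le hu1).mul_right _

theorem hasSum_integral_neg_log_div_one_sub_mul_rpow_add_rpow {a b : ℝ} (ha : 0 < a)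
    (hb : 0 < b) :
    HasSum (fun n : ℕ => 1 / (n + a) ^ 2 + 1 / (n + b) ^ 2)
      (∫ u in (0 : ℝ)..1, -log u / (1 - u) * (u ^ (a - 1) + u ^ (b - 1))) := by
  set F : ℕ → ℝ → ℝ := fun n u => u ^ (n + (a - 1)) * -log u + u ^ (n + (b - 1)) * -log u
  have hexp {c : ℝ} (hc : 0 < c) (n : ℕ) : -1 < (n : ℝ) + (c - 1) := by
    linarith [n.cast_nonneg (α := ℝ)]
  have hF_int (n : ℕ) : IntegrableOn (F n) (Ioo 0 1) :=
    ((intervalIntegrable_rpow_mul_neg_log (hexp ha n)).add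
      (intervalIntegrable_rpow_mul_neg_log (hexp hb n))).1.mono_set Ioo_subset_Ioc_self
  have hF_nonneg (n : ℕ) : 0 ≤ᵐ[volume.restrict (Ioo 0 1)] F n := by
    filter_upwards [ae_restrict_mem measurableSet_Ioo] with u hu
    have hlog := neg_nonneg.mpr (log_nonpos hu.1.le hu.2.le)
    exact add_nonneg (mul_nonneg (rpow_nonneg hu.1.le _) hlog)
      (mul_nonneg (rpow_nonneg hu.1.le _) hlog)
  have hF_integral (n : ℕ) :
      ∫ u in Ioo 0 1, F n u = 1 / (n + a) ^ 2 + 1 / (n + b) ^ 2 := by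
    rw [← integral_Ioc_eq_integral_Ioo, ← intervalIntegral.integral_of_le zero_le_one,
      intervalIntegral.integral_add (intervalIntegrable_rpow_mul_neg_log (hexp ha n))
        (intervalIntegrable_rpow_mul_neg_log (hexp hb n)),
      integral_rpow_mul_neg_log (hexp ha n), integral_rpow_mul_neg_log (hexp hb n)]
    ring_nf
  have hF_tsum : ∀ u ∈ Ioo (0 : ℝ) 1,
      ∑' n, F n u = -log u / (1 - u) * (u ^ (a - 1) + u ^ (b - 1)) := fun u hu => by
    rw [mul_add]
    exact ((hasSum_rpow_mul_neg_log hu.1 hu.2 _).add (hasSum_rpow_mul_neg_log hu.1 hu.2 _)).tsum_eq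
  have hsum (c : ℝ) : Summable fun n : ℕ => 1 / ((n : ℝ) + c) ^ 2 :=
    ((summable_one_div_nat_add_rpow c 2).mpr one_lt_two).congr fun n => by rw [rpow_two, sq_abs]
  have hI : HasSum (fun n => ∫ u in Ioo 0 1, F n u)
      (∑' n : ℕ, (1 / (n + a) ^ 2 + 1 / (n + b) ^ 2)) := by
    simp only [hF_integral]
    exact ((hsum a).add (hsum b)).hasSum
  rw [intervalIntegral.integral_of_le zero_le_one, integral_Ioc_eq_integral_Ioo,
    ← setIntegral_congr_fun measurableSet_Ioo hF_tsum, integral_tsum_of_nonneg hF_int hF_nonneg hI]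
  exact ((hsum a).add (hsum b)).hasSum

open Complex in
theorem fourierCoeffOn_exp_neg_mul {x : ℝ} {n : ℤ} (hx : x + n ≠ 0) :
    fourierCoeffOn zero_lt_one (fun t : ℝ => exp (-(2 * π * I * x * t))) n =
      (exp (-(2 * π * I * x)) - 1) / (-(2 * π * I * (x + n))) := by
  have hc : -(2 * π * I * (x + n)) ≠ 0 := by
    have : ((x + n : ℝ) : ℂ) ≠ 0 := ofReal_ne_zero.mpr hx
    push_cast at this
    simp [pi_ne_zero, I_ne_zero, this]
  rw [fourierCoeffOn_eq_integral]
  simp_rw [fourier_coe_apply, smul_eq_mul, ← Complex.exp_add]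
  rw [intervalIntegral.integral_congr (g := fun t : ℝ => exp (-(2 * π * I * (x + n)) * t))
    fun t _ => by push_cast; ring_nf, integral_exp_mul_complex hc]
  have hperiod : exp (-(2 * π * I * (x + n))) = exp (-(2 * π * I * x)) := by
    rw [show -(2 * π * I * (x + n)) = -(2 * π * I * x) + (-n : ℤ) * (2 * π * I) by push_cast; ring,
      Complex.exp_add, exp_int_mul_two_pi_mul_I, mul_one]
  simp [hperiod]

open Complex in
theorem norm_sq_fourierCoeffOn_exp_neg_mul {x : ℝ} {n : ℤ} (hx : x + n ≠ 0) :
    ‖fourierCoeffOn zero_lt_one (fun t : ℝ => exp (-(2 * π * I * x * t))) n‖ ^ 2 =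
      Real.sin (π * x) ^ 2 / π ^ 2 * (1 / (x + n) ^ 2) := by
  have hnum : ‖exp (-(2 * π * I * x)) - 1‖ = ‖2 * Real.sin (-(π * x))‖ := by
    rw [show -(2 * π * I * x) = I * ((-(2 * π * x) : ℝ) : ℂ) by push_cast; ring,
      norm_exp_I_mul_ofReal_sub_one]
    ring_nf
  have hden : ‖-(2 * π * I * (x + n))‖ = 2 * π * |x + n| := by
    rw [show -(2 * π * I * (x + n)) = ((-(2 * π * (x + n)) : ℝ) : ℂ) * I by push_cast; ring,
      norm_mul, norm_I, norm_real, Real.norm_eq_abs, abs_neg, abs_mul, abs_of_pos two_pi_pos]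
    ring
  rw [fourierCoeffOn_exp_neg_mul hx, norm_div, hnum, hden, Real.norm_eq_abs, Real.sin_neg]
  field_simp
  rw [abs_neg, sq_abs, sq_abs]
  ring

open Complex in
theorem hasSum_one_div_add_intCast_sq {x : ℝ} (hx : ∀ n : ℤ, x + n ≠ 0) :
    HasSum (fun n : ℤ => 1 / (x + n) ^ 2) (π ^ 2 / Real.sin (π * x) ^ 2) := by
  have hsin : Real.sin (π * x) ≠ 0 :=
    Real.sin_ne_zero_iff.mpr fun n hn => hx (-n) (by push_cast; nlinarith [pi_pos])
  have hnorm (t : ℝ) : ‖exp (-(2 * π * I * x * t))‖ = 1 := by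
    rw [show -(2 * π * I * x * t) = ((-(2 * π * x * t) : ℝ) : ℂ) * I by push_cast; ring,
      norm_exp_ofReal_mul_I]
  have hL2 : MemLp (fun t : ℝ => exp (-(2 * π * I * x * t))) 2 (volume.restrict (Ioc 0 1)) :=
    MemLp.of_bound (by fun_prop) 1 (ae_of_all _ fun t => (hnorm t).le)
  have hparseval := hasSum_sq_fourierCoeffOn zero_lt_one hL2
  simp only [norm_sq_fourierCoeffOn_exp_neg_mul (hx _), hnorm, one_pow,
    intervalIntegral.integral_const, sub_zero, inv_one, one_smul] at hparseval
  refine (hasSum_mul_left_iff (by positivity : Real.sin (π * x) ^ 2 / π ^ 2 ≠ 0)).mp ?_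
  rwa [div_mul_div_cancel₀ (pow_ne_zero 2 pi_ne_zero), div_self (pow_ne_zero 2 hsin)]

theorem hasSum_one_div_nat_add_sq_add_one_div_nat_add_one_sub_sq {x : ℝ}
    (hx : ∀ n : ℤ, x + n ≠ 0) :
    HasSum (fun n : ℕ => 1 / (n + x) ^ 2 + 1 / (n + (1 - x)) ^ 2) (π ^ 2 / sin (π * x) ^ 2) := by
  convert (hasSum_one_div_add_intCast_sq hx).nat_add_neg_add_one using 1
  funext n
  push_cast
  ring

theorem csc_sq_integral_repr (x : ℝ) (hx0 : 0 < x) (hx1 : x < 1) :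
    π ^ 2 * (1 / Real.sin (π * x)) ^ 2 =
      -∫ u in (0:ℝ)..1, Real.log u / (1 - u) * (u ^ (x - 1) + u ^ (-x)) := by
  have hx : ∀ n : ℤ, x + n ≠ 0 := fun n hn => by
    have h0 : (0 : ℤ) < -n := by exact_mod_cast (by linarith : (0 : ℝ) < -n)
    have h1 : -n < (1 : ℤ) := by exact_mod_cast (by linarith : (-n : ℝ) < 1)
    omega
  have h := (hasSum_integral_neg_log_div_one_sub_mul_rpow_add_rpow hx0 (sub_pos.2 hx1)).unique
    (hasSum_one_div_nat_add_sq_add_one_div_nat_add_one_sub_sq hx)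
  rw [← intervalIntegral.integral_neg, one_div_pow, mul_one_div, ← h]
  congr 1 with u
  rw [show 1 - x - 1 = -x by ring]
  ring
end

section
/- For every positive integer v ≥ 1 and all z with sin z ≠ 0, ∏_{n=1}^{v−1} (∂_z² + 4n²) applied to csc² z equals (2v−1)! · csc^{2v} z. -/
open Real

/-- The composition of the operators `∂² + 4 n²` for `n = 1, …, v - 1`. -/
noncomputable def cscOps (v : ℕ) (f : ℝ → ℝ) : ℝ → ℝ :=
  (List.range' 1 (v - 1)).foldr
    (fun n g => fun z => iteratedDeriv 2 g z + 4 * (n : ℝ) ^ 2 * g z) f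

/-!
Write `u = csc² z`. Then `u'² = 4u²(u - 1)` and `u'' = 6u² - 4u`, so `∂²` maps `P(u)` to
`(D P)(u)` with `D P = 4X²(X - 1) P'' + (6X² - 4X) P'`, a linear operator on `ℝ[X]`.
The operators `D + 4n²` commute, so they may be applied in the order `n = 1, 2, …, v - 1`,
and `(D + 4k²) Xᵏ = 2k(2k + 1) Xᵏ⁺¹` raises the power by one at each step, producing the
factor `2·3·…·(2v - 1)` in front of `Xᵛ`.
-/

open Polynomial Filter Topology

theorem Polynomial.iteratedDeriv_two_eval_comp (Q : ℝ[X]) {u u' : ℝ → ℝ} {u'' z : ℝ}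
    (hu : ∀ᶠ y in 𝓝 z, HasDerivAt u (u' y) y) (hu' : HasDerivAt u' u'' z) :
    iteratedDeriv 2 (fun y => Q.eval (u y)) z =
      (derivative (derivative Q)).eval (u z) * u' z ^ 2 + (derivative Q).eval (u z) * u'' := by
  have hderiv : deriv (fun y => Q.eval (u y)) =ᶠ[𝓝 z] fun y => (derivative Q).eval (u y) * u' y :=
    hu.mono fun y hy => ((Q.hasDerivAt (u y)).comp y hy).deriv
  rw [iteratedDeriv_succ, iteratedDeriv_one, hderiv.deriv_eq]
  refine (((Q.derivative.hasDerivAt (u z)).comp z hu.self_of_nhds).mul hu').deriv.trans ?_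
  simp only [Function.comp_apply]
  ring

theorem hasDerivAt_one_div_sin_sq {z : ℝ} (hz : sin z ≠ 0) :
    HasDerivAt (fun y => (1 / sin y) ^ 2) (-2 * cos z / sin z ^ 3) z := by
  refine (((hasDerivAt_const z 1).fun_div (hasDerivAt_sin z) hz).fun_pow 2).congr_deriv ?_
  norm_num
  field_simp

theorem hasDerivAt_cos_div_sin_pow_three {z : ℝ} (hz : sin z ≠ 0) :
    HasDerivAt (fun y => -2 * cos y / sin y ^ 3)
      (6 * ((1 / sin z) ^ 2) ^ 2 - 4 * (1 / sin z) ^ 2) z := by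
  refine (((hasDerivAt_cos z).const_mul (-2)).fun_div ((hasDerivAt_sin z).fun_pow 3)
    (pow_ne_zero 3 hz)).congr_deriv ?_
  field_simp
  linear_combination (6 * sin z ^ 2) * sin_sq_add_cos_sq z

noncomputable def cscSqDeriv2 : Module.End ℝ ℝ[X] :=
  LinearMap.mulLeft ℝ (4 * X ^ 2 * (X - 1)) ∘ₗ derivative ∘ₗ derivative +
    LinearMap.mulLeft ℝ (6 * X ^ 2 - 4 * X) ∘ₗ derivative

theorem cscSqDeriv2_apply (P : ℝ[X]) :
    cscSqDeriv2 P =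
      4 * X ^ 2 * (X - 1) * derivative (derivative P) + (6 * X ^ 2 - 4 * X) * derivative P :=
  rfl

theorem iteratedDeriv_two_eval_one_div_sin_sq (Q : ℝ[X]) {z : ℝ} (hz : sin z ≠ 0) :
    iteratedDeriv 2 (fun y => Q.eval ((1 / sin y) ^ 2)) z =
      (cscSqDeriv2 Q).eval ((1 / sin z) ^ 2) := by
  rw [Q.iteratedDeriv_two_eval_comp ((continuous_sin.continuousAt.eventually_ne hz).mono
    fun y hy => hasDerivAt_one_div_sin_sq hy) (hasDerivAt_cos_div_sin_pow_three hz)]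
  simp only [cscSqDeriv2_apply, eval_add, eval_mul, eval_pow, eval_sub, eval_X, eval_one,
    eval_ofNat]
  have hsq : (-2 * cos z / sin z ^ 3) ^ 2 = 4 * ((1 / sin z) ^ 2) ^ 2 * ((1 / sin z) ^ 2 - 1) := by
    field_simp
    linear_combination 4 * sin_sq_add_cos_sq z
  rw [hsq]
  ring

noncomputable def cscSqOp (c : ℝ) : Module.End ℝ ℝ[X] :=
  cscSqDeriv2 + algebraMap ℝ (Module.End ℝ ℝ[X]) (4 * c ^ 2)

theorem cscSqOp_apply (c : ℝ) (P : ℝ[X]) : cscSqOp c P = cscSqDeriv2 P + (4 * c ^ 2) • P :=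
  rfl

theorem commute_cscSqOp (a b : ℝ) : Commute (cscSqOp a) (cscSqOp b) :=
  ((Commute.refl _).add_right (Algebra.commute_algebraMap_right _ _)).add_left
    ((Algebra.commute_algebraMap_left _ _).add_right (Algebra.commute_algebraMap_left _ _))

theorem cscSqOp_X_pow (k : ℕ) :
    cscSqOp k (X ^ k) = (2 * k * (2 * k + 1) : ℝ) • X ^ (k + 1) := by
  rcases k with _ | _ | j
  · simp [cscSqOp_apply, cscSqDeriv2_apply]
  · simp only [cscSqOp_apply, cscSqDeriv2_apply, smul_eq_C_mul, zero_add, pow_one, Nat.cast_one,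
      one_pow, derivative_X, derivative_one, map_mul, map_add, map_one, map_ofNat]
    ring
  · rw [cscSqOp_apply, cscSqDeriv2_apply, derivative_X_pow, derivative_C_mul, derivative_X_pow,
      smul_eq_C_mul, smul_eq_C_mul]
    simp only [add_tsub_cancel_right, Nat.cast_add, Nat.cast_one, map_add, map_mul, map_pow,
      map_natCast, map_one, map_ofNat]
    ring

theorem list_prod_cscSqOp_range'_X (m : ℕ) :
    ((List.range' 1 m).map fun n : ℕ => cscSqOp n).prod X =
      ((2 * m + 1).factorial : ℝ) • X ^ (m + 1) := by
  induction m with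
  | zero => simp
  | succ m ih =>
    rw [List.range'_concat, List.map_append, List.prod_append, List.map_singleton,
      List.prod_singleton, ((Commute.list_prod_left _ _ fun _ hB => ?_)).eq]
    · rw [Module.End.mul_apply, ih, map_smul, one_mul, add_comm 1 m, cscSqOp_X_pow, smul_smul]
      congr 1
      push_cast [show 2 * (m + 1) + 1 = 2 * m + 1 + 1 + 1 by ring, Nat.factorial_succ]
      ring
    · obtain ⟨n, -, rfl⟩ := List.mem_map.1 hB
      exact commute_cscSqOp _ _

theorem foldr_eval_one_div_sin_sq (L : List ℝ) (P : ℝ[X]) {z : ℝ} (hz : sin z ≠ 0) :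
    L.foldr (fun c g => fun z => iteratedDeriv 2 g z + 4 * c ^ 2 * g z)
        (fun y => P.eval ((1 / sin y) ^ 2)) z =
      ((L.map cscSqOp).prod P).eval ((1 / sin z) ^ 2) := by
  induction L generalizing z with
  | nil => rfl
  | cons n L ih =>
    have hnear : L.foldr (fun c g => fun z => iteratedDeriv 2 g z + 4 * c ^ 2 * g z)
        (fun y => P.eval ((1 / sin y) ^ 2)) =ᶠ[𝓝 z]
          fun y => ((L.map cscSqOp).prod P).eval ((1 / sin y) ^ 2) :=
      (continuous_sin.continuousAt.eventually_ne hz).mono fun y hy => ih hy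
    simp only [List.foldr_cons, List.map_cons, List.prod_cons, Module.End.mul_apply,
      (hnear.iteratedDeriv 2).eq_of_nhds, iteratedDeriv_two_eval_one_div_sin_sq _ hz, ih hz,
      cscSqOp_apply, eval_add, eval_smul, smul_eq_mul]

theorem csc_ops_identity (v : ℕ) (hv : 1 ≤ v) (z : ℝ) (hz : Real.sin z ≠ 0) :
    cscOps v (fun y => (1 / Real.sin y) ^ 2) z
      = (2 * v - 1).factorial * (1 / Real.sin z) ^ (2 * v) := by
  obtain ⟨m, rfl⟩ := Nat.exists_eq_add_of_le' hv
  have hX : (fun y => (1 / sin y) ^ 2) = fun y => (X : ℝ[X]).eval ((1 / sin y) ^ 2) := by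
    simp only [eval_X]
  -- `cscOps` elaborates its `(n : ℝ)` by coercing the list itself, through the list monad.
  have hops : ((do let a ← List.range' 1 m; pure (a : ℝ)) : List ℝ).map cscSqOp =
      (List.range' 1 m).map fun n : ℕ => cscSqOp n := by
    simp [← List.map_eq_flatMap]
  rw [cscOps, hX, foldr_eval_one_div_sin_sq _ _ hz, Nat.add_sub_cancel, hops,
    list_prod_cscSqOp_range'_X, eval_smul, eval_pow, eval_X, smul_eq_mul, ← pow_mul,
    show 2 * (m + 1) - 1 = 2 * m + 1 by omega, mul_comm 2 (m + 1)]
end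

section
/- For every positive integer m, Σ_{k=1}^{m-1} csc⁴(kπ/m) = (m² − 1)(m² + 11)/45. -/
/-!
The numbers `c_k = cos (kπ/m)`, `0 < k < m`, are the roots of the Chebyshev polynomial `U_{m-1}`,
so the power sums of `1/(1 - c_k)` are the logarithmic derivatives of `U_{m-1}` at `1`, where
`U`, `U'` and `U''` have closed forms. With `x = 1/(1 - c)` and `y = 1/(1 + c)` one has
`x + y = 2xy`, hence `csc⁴ = x²y² = (x² + y² + x + y)/4`, and the reflection `k ↦ m - k`
exchanges `x` and `y`.
-/

open Real Finset Polynomial Polynomial.Chebyshev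

namespace Polynomial

variable {K : Type*} [Field K]

theorem eval_derivative_multiset_prod_X_sub_C {s : Multiset K} {a : K} (ha : a ∉ s) :
    (derivative (s.map fun r => X - C r).prod).eval a =
      (s.map fun r => X - C r).prod.eval a * (s.map fun r => (a - r)⁻¹).sum := by
  induction s using Multiset.induction_on with
  | empty => simp
  | cons r s ih =>
    have har : a - r ≠ 0 := sub_ne_zero.mpr fun h => ha (h ▸ Multiset.mem_cons_self r s)
    simp only [Multiset.map_cons, Multiset.prod_cons, Multiset.sum_cons, derivative_mul,
      derivative_X_sub_C, one_mul, eval_add, eval_mul, eval_sub, eval_X, eval_C,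
      ih fun h => ha (Multiset.mem_cons_of_mem h)]
    field_simp

theorem eval_derivative_derivative_multiset_prod_X_sub_C {s : Multiset K} {a : K} (ha : a ∉ s) :
    (derivative (derivative (s.map fun r => X - C r).prod)).eval a =
      (s.map fun r => X - C r).prod.eval a *
        ((s.map fun r => (a - r)⁻¹).sum ^ 2 - (s.map fun r => (a - r)⁻¹ ^ 2).sum) := by
  induction s using Multiset.induction_on with
  | empty => simp
  | cons r s ih =>
    have ha' : a ∉ s := fun h => ha (Multiset.mem_cons_of_mem h)
    have har : a - r ≠ 0 := sub_ne_zero.mpr fun h => ha (h ▸ Multiset.mem_cons_self r s)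
    simp only [Multiset.map_cons, Multiset.prod_cons, Multiset.sum_cons, derivative_mul,
      derivative_add, derivative_X_sub_C, one_mul, eval_add, eval_mul, eval_sub, eval_X, eval_C,
      ih ha', eval_derivative_multiset_prod_X_sub_C ha']
    field_simp
    ring

theorem eval_derivative_eq_mul_sum_roots {p : K[X]}
    (hroots : Multiset.card p.roots = p.natDegree) {a : K} (ha : ¬ p.IsRoot a) :
    (derivative p).eval a = p.eval a * (p.roots.map fun r => (a - r)⁻¹).sum := by
  have hp := C_leadingCoeff_mul_prod_multiset_X_sub_C hroots
  have ha' : a ∉ p.roots := fun h => ha (isRoot_of_mem_roots h)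
  conv_lhs => rw [← hp]
  rw [derivative_C_mul, eval_mul, eval_C, eval_derivative_multiset_prod_X_sub_C ha', ← mul_assoc,
    ← eval_C_mul, hp]

theorem eval_derivative_derivative_eq_mul_sum_roots {p : K[X]}
    (hroots : Multiset.card p.roots = p.natDegree) {a : K} (ha : ¬ p.IsRoot a) :
    (derivative (derivative p)).eval a = p.eval a *
      ((p.roots.map fun r => (a - r)⁻¹).sum ^ 2 - (p.roots.map fun r => (a - r)⁻¹ ^ 2).sum) := by
  have hp := C_leadingCoeff_mul_prod_multiset_X_sub_C hroots
  have ha' : a ∉ p.roots := fun h => ha (isRoot_of_mem_roots h)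
  conv_lhs => rw [← hp]
  rw [derivative_C_mul, derivative_C_mul, eval_mul, eval_C,
    eval_derivative_derivative_multiset_prod_X_sub_C ha', ← mul_assoc, ← eval_C_mul, hp]

end Polynomial

namespace Polynomial.Chebyshev

theorem roots_U_real_eq_map (n : ℕ) :
    (U ℝ n).roots = (Multiset.range n).map fun k : ℕ => cos ((k + 1) * π / (n + 1)) := by
  rw [roots_U_real, Finset.image_val, Finset.range_val, (roots_U_real_nodup n).dedup]

theorem card_roots_U_real (n : ℕ) : Multiset.card (U ℝ n).roots = (U ℝ n).natDegree := by
  rw [roots_U_real_eq_map, Multiset.card_map, Multiset.card_range, natDegree_U_natCast]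

theorem not_isRoot_U_real_one (n : ℕ) : ¬ (U ℝ n).IsRoot 1 := by
  rw [IsRoot, U_eval_one]
  push_cast
  positivity

theorem sum_map_roots_U_real (n : ℕ) (f : ℝ → ℝ) :
    ((U ℝ n).roots.map f).sum = ∑ k ∈ range n, f (cos ((k + 1) * π / (n + 1))) := by
  rw [roots_U_real_eq_map, Multiset.map_map]
  rfl

theorem sum_range_inv_one_sub_cos (n : ℕ) :
    ∑ k ∈ range n, (1 - cos ((k + 1) * π / (n + 1)))⁻¹ = n * (n + 2) / 3 := by
  have h := eval_derivative_eq_mul_sum_roots (card_roots_U_real n) (not_isRoot_U_real_one n)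
  have h3 := derivative_U_eval_one (R := ℝ) n
  rw [sum_map_roots_U_real, U_eval_one] at h
  push_cast at h h3
  apply mul_left_cancel₀ (by positivity : (n + 1 : ℝ) ≠ 0)
  linear_combination (h3 - 3 * h) / 3

theorem sum_range_inv_one_sub_cos_sq (n : ℕ) :
    ∑ k ∈ range n, (1 - cos ((k + 1) * π / (n + 1)))⁻¹ ^ 2 =
      n * (n + 2) * (2 * n ^ 2 + 4 * n + 9) / 45 := by
  have h := eval_derivative_derivative_eq_mul_sum_roots (card_roots_U_real n)
    (not_isRoot_U_real_one n)
  have h15 := iterate_derivative_U_eval_one (R := ℝ) n 2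
  rw [sum_map_roots_U_real, sum_map_roots_U_real, sum_range_inv_one_sub_cos, U_eval_one] at h
  simp only [prod_range_succ, prod_range_zero, Function.iterate_succ, Function.iterate_zero,
    Function.comp_apply, id] at h15
  push_cast at h h15
  apply mul_left_cancel₀ (by positivity : (n + 1 : ℝ) ≠ 0)
  linear_combination h - h15 / 15

end Polynomial.Chebyshev

namespace Real

theorem one_div_sin_pow_four {θ : ℝ} (h : sin θ ≠ 0) :
    (1 / sin θ) ^ 4 =
      ((1 - cos θ)⁻¹ ^ 2 + (1 + cos θ)⁻¹ ^ 2 + (1 - cos θ)⁻¹ + (1 + cos θ)⁻¹) / 4 := by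
  have hs : sin θ ^ 2 = (1 - cos θ) * (1 + cos θ) := by
    linear_combination sin_sq_add_cos_sq θ
  obtain ⟨hsub, hadd⟩ := mul_ne_zero_iff.mp (hs ▸ pow_ne_zero 2 h)
  rw [show (1 / sin θ) ^ 4 = ((sin θ ^ 2)⁻¹) ^ 2 by ring, hs]
  field_simp
  ring

theorem sin_succ_mul_pi_div_succ_ne_zero {n k : ℕ} (hk : k < n) :
    sin ((k + 1) * π / (n + 1)) ≠ 0 := by
  refine (sin_pos_of_pos_of_lt_pi (by positivity) ?_).ne'
  rw [div_lt_iff₀ (by positivity)]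
  have : (k : ℝ) + 1 < n + 1 := by exact_mod_cast Nat.succ_lt_succ hk
  nlinarith [pi_pos]

theorem sum_range_comp_one_add_cos (n : ℕ) (f : ℝ → ℝ) :
    ∑ k ∈ range n, f (1 + cos ((k + 1) * π / (n + 1))) =
      ∑ k ∈ range n, f (1 - cos ((k + 1) * π / (n + 1))) := by
  rw [← sum_range_reflect]
  refine sum_congr rfl fun k hk => ?_
  have hkn : k < n := mem_range.mp hk
  have hθ : (((n - 1 - k : ℕ) : ℝ) + 1) * π / (n + 1) = π - (k + 1) * π / (n + 1) := by
    rw [Nat.cast_sub (by omega), Nat.cast_sub (by omega)]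
    field_simp
    ring
  rw [hθ, cos_pi_sub, sub_eq_add_neg]

end Real

theorem dowker_v2 (m : ℕ) (hm : 0 < m) :
    ∑ k ∈ Finset.Icc 1 (m - 1), (1 / Real.sin (k * π / m)) ^ 4 =
      ((m : ℝ) ^ 2 - 1) * ((m : ℝ) ^ 2 + 11) / 45 := by
  obtain ⟨n, rfl⟩ : ∃ n, m = n + 1 := ⟨m - 1, by omega⟩
  rw [Nat.add_sub_cancel, ← Ico_add_one_right_eq_Icc, sum_Ico_eq_sum_range, Nat.add_sub_cancel]
  simp only [Nat.cast_add, Nat.cast_one, add_comm 1]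
  rw [sum_congr rfl fun k hk =>
      one_div_sin_pow_four (sin_succ_mul_pi_div_succ_ne_zero (mem_range.mp hk)),
    ← sum_div, sum_add_distrib, sum_add_distrib, sum_add_distrib,
    sum_range_comp_one_add_cos n fun t => t⁻¹ ^ 2, sum_range_comp_one_add_cos n fun t => t⁻¹,
    sum_range_inv_one_sub_cos, sum_range_inv_one_sub_cos_sq]
  ring
end
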